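/- Concentration of the cross terms. Under the pLSI model, suppose Nn·h_min/log(n) → ∞, and let Z = D − D_0 with rows Z_1',…,Z_p' and let W_k' denote the k-th row of W. Then with probability 1 − o(n^{-3}), for all 1 ≤ k ≤ K: |Z_j'W_k| ≤ C·N^{-1/2}√(n·h_j·log(n)) for all 1 ≤ j ≤ p, and ‖M_0^{-1/2}ZW_k‖ ≤ C·N^{-1/2}√(n·p·log(n)). -/

import Mathlib

noncomputable section
open Filter MeasureTheory ProbabilityTheory Matrix Finset Real
open scoped Classical

namespace TopicModel

/-- Euclidean norm of a vector given by a function. -/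
def enorm {m : Type*} [Fintype m] (x : m → ℝ) : ℝ := Real.sqrt (∑ i, (x i) ^ 2)

/-- ℓ¹-norm of a vector given by a function. -/
def l1norm {m : Type*} [Fintype m] (x : m → ℝ) : ℝ := ∑ i, |x i|

/-- A probability (weight) vector: nonnegative entries summing to 1. -/
def IsProbVec {m : Type*} [Fintype m] (v : m → ℝ) : Prop :=
  (∀ i, 0 ≤ v i) ∧ ∑ i, v i = 1

/-- All columns of a matrix are probability vectors. -/
def ColsProb {p K : ℕ} (A : Matrix (Fin p) (Fin K) ℝ) : Prop :=
  ∀ k, IsProbVec fun j => A j k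

/-- `h_j`: the ℓ¹ norm of the j-th row of `A`. -/
def rowL1 {p K : ℕ} (A : Matrix (Fin p) (Fin K) ℝ) (j : Fin p) : ℝ := ∑ k, |A j k|

/-- The diagonal of `diag(n⁻¹ D 1_n)`. -/
def diagAvg {p n : ℕ} (D : Matrix (Fin p) (Fin n) ℝ) (j : Fin p) : ℝ :=
  (n : ℝ)⁻¹ * ∑ i, D j i

/-- `M^{-1/2} D` for a diagonal normalization `Mdg`. -/
def nrm {p n : ℕ} (D : Matrix (Fin p) (Fin n) ℝ) (Mdg : Fin p → ℝ) :
    Matrix (Fin p) (Fin n) ℝ :=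
  Matrix.of fun j i => (Real.sqrt (Mdg j))⁻¹ * D j i

/-- Spectral norm of a (rectangular) matrix. -/
def specNorm {p n : ℕ} (B : Matrix (Fin p) (Fin n) ℝ) : ℝ :=
  ⨆ x : {x : Fin n → ℝ // ∑ i, (x i) ^ 2 ≤ 1}, enorm (B *ᵥ x.1)

/-- A family of vectors is orthonormal. -/
def OrthonormalRows {K : ℕ} {p : Type*} [Fintype p] (u : Fin K → p → ℝ) : Prop :=
  ∀ k l, ∑ j, u k j * u l j = if k = l then (1 : ℝ) else 0

/-- `(lam k, u k)` are eigenpairs of `G`, with orthonormal eigenvectors. -/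
def IsEigenPairs {p K : ℕ} (G : Matrix (Fin p) (Fin p) ℝ)
    (lam : Fin K → ℝ) (u : Fin K → Fin p → ℝ) : Prop :=
  OrthonormalRows u ∧ ∀ k, G *ᵥ u k = lam k • u k

/-- `xi` consists of the `K` leading (unit-norm) eigenvectors of `G`: the first `K`
vectors of a full orthonormal eigenbasis whose eigenvalues are in decreasing order. -/
def LeadingEigenvectors {p K : ℕ} (hKp : K ≤ p) (G : Matrix (Fin p) (Fin p) ℝ)
    (xi : Fin K → Fin p → ℝ) : Prop :=
  ∃ (lam : Fin p → ℝ) (u : Fin p → Fin p → ℝ),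
    IsEigenPairs G lam u ∧ Antitone lam ∧ ∀ k : Fin K, xi k = u (Fin.castLE hKp k)

/-- `xi` consists of the `K` leading left singular vectors of `B`,
i.e. the `K` leading eigenvectors of `B Bᵀ`. -/
def LeadingLeftSingVecs {p n K : ℕ} (hKp : K ≤ p) (B : Matrix (Fin p) (Fin n) ℝ)
    (xi : Fin K → Fin p → ℝ) : Prop :=
  LeadingEigenvectors hKp (B * Bᵀ) xi

/-- `λ_min(S) ≥ c`, expressed through the quadratic form. -/
def lamMinGe {K : ℕ} (S : Matrix (Fin K) (Fin K) ℝ) (c : ℝ) : Prop :=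
  ∀ x : Fin K → ℝ, c * ∑ k, (x k) ^ 2 ≤ x ⬝ᵥ (S *ᵥ x)

/-- The topic-topic concurrence matrix `Σ_W = n⁻¹ W W'`. -/
def SigmaW {K n : ℕ} (W : Matrix (Fin K) (Fin n) ℝ) : Matrix (Fin K) (Fin K) ℝ :=
  (n : ℝ)⁻¹ • (W * Wᵀ)

/-- The topic-topic correlation matrix `Σ_A = A' H⁻¹ A`. -/
def SigmaA {p K : ℕ} (A : Matrix (Fin p) (Fin K) ℝ) : Matrix (Fin K) (Fin K) ℝ :=
  Aᵀ * (Matrix.diagonal fun j => (rowL1 A j)⁻¹) * A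

/-- The matrix `Σ̃_A = A' M₀⁻¹ A`. -/
def SigmaAt {p K n : ℕ} (A : Matrix (Fin p) (Fin K) ℝ) (W : Matrix (Fin K) (Fin n) ℝ) :
    Matrix (Fin K) (Fin K) ℝ :=
  Aᵀ * (Matrix.diagonal fun j => (diagAvg (A * W) j)⁻¹) * A

/-- All the singular values of the square matrix `S` are pairwise at least `c` apart. -/
def SingValGapGe {K : ℕ} (S : Matrix (Fin K) (Fin K) ℝ) (c : ℝ) : Prop :=
  ∃ (s : Fin K → ℝ) (v : Fin K → Fin K → ℝ),
    (∀ k, 0 ≤ s k) ∧ IsEigenPairs (Sᵀ * S) (fun k => (s k) ^ 2) v ∧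
    ∀ k l, k ≠ l → c ≤ |s k - s l|

/-- Regularity conditions (R1)-(R2). -/
def Reg12 {p K n : ℕ} (A : Matrix (Fin p) (Fin K) ℝ) (W : Matrix (Fin K) (Fin n) ℝ)
    (c1 c2 : ℝ) : Prop :=
  ColsProb A ∧ ColsProb W ∧ (∀ j, 0 < rowL1 A j) ∧
  lamMinGe (SigmaW W) c1 ∧ lamMinGe (SigmaA A) c1 ∧
  (∀ k l, c1 ≤ SigmaA A k l) ∧ SingValGapGe (SigmaW W * SigmaAt A W) c2

/-- `j` is an anchor word for topic `k`. -/
def IsAnchor {p K : ℕ} (A : Matrix (Fin p) (Fin K) ℝ) (j : Fin p) (k : Fin K) : Prop :=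
  A j k ≠ 0 ∧ ∀ l, l ≠ k → A j l = 0

/-- Regularity condition (R3): each topic has at least `mp` anchor words, each of
frequency at least `δp`. -/
def Reg3 {p K : ℕ} (A : Matrix (Fin p) (Fin K) ℝ) (mp : ℕ) (δp : ℝ) : Prop :=
  ∀ k, (mp ≤ Set.ncard {j | IsAnchor A j k}) ∧
    ∀ j, IsAnchor A j k → δp ≤ rowL1 A j

/-- `ã_j = a_j / h_j`: the ℓ¹-normalized `j`-th row of `A`. -/
def tildeRow {p K : ℕ} (A : Matrix (Fin p) (Fin K) ℝ) (j : Fin p) (k : Fin K) : ℝ :=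
  A j k / rowL1 A j

/-- Whether `j` is a non-anchor word. -/
def NonAnchor {p K : ℕ} (A : Matrix (Fin p) (Fin K) ℝ) (j : Fin p) : Prop :=
  ¬ ∃ k, IsAnchor A j k

/-- The k-means loss `RSS_n(L)` associated with the `ã_j` of non-anchor words. -/
def RSS {p K : ℕ} (A : Matrix (Fin p) (Fin K) ℝ) (L : ℕ) : ℝ :=
  ⨅ η : Fin L → Fin K → ℝ,
    ∑ j ∈ Finset.univ.filter (fun j => NonAnchor A j),
      ⨅ l : Fin L, ∑ k, (tildeRow A j k - η l k) ^ 2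

/-- Regularity condition (R4). -/
def Reg4 {p K : ℕ} (A : Matrix (Fin p) (Fin K) ℝ) (c3 : ℝ) (L0 mp n : ℕ) : Prop :=
  (∀ j, NonAnchor A j → ∀ k : Fin K,
      c3 ≤ enorm (fun l => tildeRow A j l - if l = k then 1 else 0)) ∧
  RSS A L0 ≤ (mp : ℝ) / Real.log n

/-- The empirical word-frequency matrix `D` built from the words `X i m` of the
`n` documents (each of length `N`). -/
def empD {p n N : ℕ} (X : Fin n → Fin N → Fin p) : Matrix (Fin p) (Fin n) ℝ :=
  Matrix.of fun j i => (N : ℝ)⁻¹ * ∑ m, if X i m = j then (1 : ℝ) else 0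

/-- The pLSI sampling model: the words `X ω i m` (word `m` of document `i`) are
independent across all `(i,m)`, and word `m` of document `i` equals `j` with
probability `D0 j i`.  This is exactly the statement that the columns of the
empirical frequency matrix are independent with `N dᵢ ~ Multinomial(N, d⁰ᵢ)`. -/
def IsPLSIWords {Ω : Type*} [MeasurableSpace Ω] (μ : Measure Ω)
    {p n N : ℕ} (D0 : Matrix (Fin p) (Fin n) ℝ)
    (X : Ω → Fin n → Fin N → Fin p) : Prop :=
  IsProbabilityMeasure μ ∧
  (∀ i m, Measurable fun ω => X ω i m) ∧
  iIndepFun (fun (im : Fin n × Fin N) ω => X ω im.1 im.2) μ ∧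
  ∀ i m j, (μ {ω | X ω i m = j}).toReal = D0 j i

/-- Sign vectors (diagonal ±1 matrices). -/
def SignVec (K : ℕ) : Type := {ω : Fin K → ℝ // ∀ k, ω k = 1 ∨ ω k = -1}

instance (K : ℕ) : Nonempty (SignVec K) := ⟨⟨fun _ => 1, fun _ => Or.inl rfl⟩⟩

/-- `Δ₁(Z, D₀) = min_{Ω ∈ O_K} max_j h_j^{-1/2} ‖Ω Ξ̂_j - Ξ_j‖`. -/
def Delta1 {p K : ℕ} (hA : Fin p → ℝ) (xihat xi : Fin K → Fin p → ℝ) : ℝ :=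
  ⨅ ω : SignVec K, ⨆ j, (Real.sqrt (hA j))⁻¹ * enorm (fun k => ω.1 k * xihat k j - xi k j)

/-- `Δ₂(Z, D₀) = max_j h_j⁻¹ |M(j,j) - M₀(j,j)|`. -/
def Delta2 {p : ℕ} (hA : Fin p → ℝ) (Md M0d : Fin p → ℝ) : ℝ :=
  ⨆ j, (hA j)⁻¹ * |Md j - M0d j|

/-- The matrix of entry-wise eigen-ratios: `R(j,t) = ξ_{t+1}(j) / ξ_1(j)`. -/
def ratioR {p K : ℕ} (xi : Fin (K + 1) → Fin p → ℝ) (j : Fin p) (t : Fin K) : ℝ :=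
  xi t.succ j / xi 0 j

/-- `V*(ℓ,t) = V_{t+1}(ℓ) / V_1(ℓ)`. -/
def VstarOf {K : ℕ} (V : Matrix (Fin (K + 1)) (Fin (K + 1)) ℝ) (l : Fin (K + 1))
    (t : Fin K) : ℝ :=
  V l t.succ / V l 0

/-- The k-means objective with centers `θ`. -/
def kmeansObj {p K L : ℕ} (r : Fin p → Fin K → ℝ) (θ : Fin L → Fin K → ℝ) : ℝ :=
  ∑ j, ⨅ l : Fin L, ∑ t, (r j t - θ l t) ^ 2

/-- Euclidean distance from `b` to the simplex with vertices `vs 0, …, vs K`. -/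
def simplexDist {K : ℕ} (b : Fin K → ℝ) (vs : Fin (K + 1) → Fin K → ℝ) : ℝ :=
  ⨅ w : {w : Fin (K + 1) → ℝ // IsProbVec w},
    enorm (fun t => b t - ∑ k, w.1 k * vs k t)

/-- The max distance of a center to the simplex spanned by the selected centers. -/
def maxSimplexDist {K L : ℕ} (θ : Fin L → Fin K → ℝ) (s : Fin (K + 1) → Fin L) : ℝ :=
  ⨆ l, simplexDist (θ l) fun k => θ (s k)

/-- Specification of the two-stage Vertices Hunting algorithm: `θ` is a global optimum
of the k-means objective with `L` clusters, and `s` selects `K+1` affinely independent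
cluster centers minimizing the maximal distance of a center to their simplex. -/
def VHSpec {p K L : ℕ} (r : Fin p → Fin K → ℝ) (θ : Fin L → Fin K → ℝ)
    (s : Fin (K + 1) → Fin L) : Prop :=
  (∀ θ' : Fin L → Fin K → ℝ, kmeansObj r θ ≤ kmeansObj r θ') ∧
  Function.Injective s ∧ AffineIndependent ℝ (fun k => θ (s k)) ∧
  ∀ s' : Fin (K + 1) → Fin L, Function.Injective s' →
    AffineIndependent ℝ (fun k => θ (s' k)) →
      maxSimplexDist θ s ≤ maxSimplexDist θ s'

/-- The barycentric-coordinates step: `π*_j` solves the linear system given by the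
estimated vertices. -/
def BarySpec {p K : ℕ} (r : Fin p → Fin K → ℝ) (v : Fin (K + 1) → Fin K → ℝ)
    (pistar : Fin p → Fin (K + 1) → ℝ) : Prop :=
  ∀ j, (∑ k, pistar j k = 1) ∧ ∀ t, ∑ k, pistar j k * v k t = r j t

/-- Truncate negative entries to zero and renormalize to unit sum. -/
def truncNorm {K : ℕ} (x : Fin K → ℝ) : Fin K → ℝ :=
  fun k => max (x k) 0 / ∑ l, max (x l) 0

/-- The final Topic-SCORE output `Â`: form `Â* = M^{1/2} diag(ξ̂₁) Π̂` and normalize each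
column to unit ℓ¹-norm. -/
def AhatOf {p K : ℕ} (Ddiag : Fin p → ℝ) (xihat : Fin (K + 1) → Fin p → ℝ)
    (pihat : Fin p → Fin (K + 1) → ℝ) : Matrix (Fin p) (Fin (K + 1)) ℝ :=
  Matrix.of fun j k =>
    (Real.sqrt (Ddiag j) * xihat 0 j * pihat j k) /
      ∑ j', |Real.sqrt (Ddiag j') * xihat 0 j' * pihat j' k|

/-- Full specification of the Topic-SCORE estimator (with `t = ∞`) applied to data `D`. -/
def TopicScoreSpec {p n K L : ℕ} (hKp : K + 1 ≤ p) (D : Matrix (Fin p) (Fin n) ℝ)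
    (xihat : Fin (K + 1) → Fin p → ℝ) (θ : Fin L → Fin K → ℝ) (s : Fin (K + 1) → Fin L)
    (pistar : Fin p → Fin (K + 1) → ℝ) (Ahat : Matrix (Fin p) (Fin (K + 1)) ℝ) : Prop :=
  LeadingLeftSingVecs hKp (nrm D (diagAvg D)) xihat ∧
  VHSpec (ratioR xihat) θ s ∧
  BarySpec (ratioR xihat) (fun k => θ (s k)) pistar ∧
  Ahat = AhatOf (diagAvg D) xihat fun j => truncNorm (pistar j)

/-- The ℓ¹ estimation loss `L(Â, A)`, minimized over permutations of the topics. -/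
def TVLoss {p K : ℕ} (Ahat A : Matrix (Fin p) (Fin K) ℝ) : ℝ :=
  ⨅ κ : Equiv.Perm (Fin K), ∑ k, ∑ j, |Ahat j (κ k) - A j k|

/-!
Writing `N d_i` as a sum of `N` independent one-hot word indicators, the cross term
`Z_j' w = ∑_i (d_i(j) - d⁰_i(j)) w_i` is a sum of `nN` independent centred variables
`(w_i / N) (1{word = j} - d⁰_i(j))`. Since `e^u ≤ 1 + u + u²` for `|u| ≤ 1`, each has
moment generating function at most `exp (d⁰_i(j) (w_i / N)² λ²)` for `|λ| ≤ N`, so the total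
variance proxy is at most `n h_j / N` and a Chernoff bound gives
`P(|Z_j' W_k| ≥ 8 N^{-1/2} √(n h_j log n)) ≤ 2 n^{-16}` once `N n h_j ≥ 16 log n`, which is
where `N n h_min / log n → ∞` enters. A union bound over the `(K + 1) p ≤ (K + 1) n` pairs
`(k, j)` leaves `O(n^{-15})`. On the complementary event the weighted bound is deterministic:
`M₀(j,j) ≥ c₁ h_j`, so each coordinate of `M₀^{-1/2} Z W_k` is at most
`8 (c₁ N)^{-1/2} √(n log n)`.
-/

section Bernstein

variable {Ω : Type*} [MeasurableSpace Ω] {μ : Measure Ω} [IsProbabilityMeasure μ]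

lemma mgf_const_mul_indicator_sub_le {s : Set Ω} (hs : MeasurableSet s) {c t : ℝ}
    (hct : |t * c| ≤ 1) :
    mgf (fun ω => c * (s.indicator 1 ω - μ.real s)) μ t ≤ exp (μ.real s * (t * c) ^ 2) := by
  set q := μ.real s
  set u := t * c
  have hq : 0 ≤ q := measureReal_nonneg
  have h_exp : (fun ω => exp (t * (c * (s.indicator 1 ω - q))))
      = fun ω => s.indicator (fun _ => exp (u * (1 - q)) - exp (-(u * q))) ω + exp (-(u * q)) := by
    funext ω
    by_cases h : ω ∈ s <;> simp [h, u] <;> ring_nf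
  have h_mgf : mgf (fun ω => c * (s.indicator 1 ω - q)) μ t
      = q * exp (u * (1 - q)) + (1 - q) * exp (-(u * q)) := by
    rw [mgf, h_exp, integral_add ((integrable_const _).indicator hs) (integrable_const _),
      integral_indicator_const _ hs, integral_const, probReal_univ]
    simp only [smul_eq_mul]
    ring
  calc mgf (fun ω => c * (s.indicator 1 ω - q)) μ t
      = exp (-(u * q)) * (1 + q * (exp u - 1)) := by
        rw [h_mgf, show u * (1 - q) = u + -(u * q) by ring, exp_add]
        ring
    _ ≤ exp (-(u * q)) * exp (q * (exp u - 1)) := by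
        gcongr
        linarith [add_one_le_exp (q * (exp u - 1))]
    _ = exp (q * (exp u - 1 - u)) := by rw [← exp_add]; ring_nf
    _ ≤ exp (q * u ^ 2) := by
        gcongr
        linarith [(abs_le.mp (abs_exp_sub_one_sub_id_le hct)).2]

variable {ι : Type*} [Fintype ι] {X : ι → Ω → ℝ} {σ : ι → ℝ} {b V t : ℝ}

lemma measureReal_sum_ge_le_of_mgf_le (h_meas : ∀ i, Measurable (X i))
    (h_indep : iIndepFun X μ) (h_int : ∀ i l, Integrable (fun ω => exp (l * X i ω)) μ)
    (h_mgf : ∀ i l, |l| ≤ b → mgf (X i) μ l ≤ exp (σ i * l ^ 2))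
    (hσ : ∑ i, σ i ≤ V) (hV : 0 < V) (ht₀ : 0 ≤ t) (ht : t ≤ 2 * b * V) :
    μ.real {ω | t ≤ ∑ i, X i ω} ≤ exp (-t ^ 2 / (4 * V)) := by
  set l := t / (2 * V)
  have hl : 0 ≤ l := by positivity
  have hlb : |l| ≤ b := by
    rw [abs_of_nonneg hl, div_le_iff₀ (by positivity)]
    linarith
  have h_chernoff := measure_ge_le_exp_mul_mgf (X := ∑ i, X i) t hl
    (h_indep.integrable_exp_mul_sum h_meas fun i _ => h_int i l)
  calc μ.real {ω | t ≤ ∑ i, X i ω} ≤ exp (-l * t) * mgf (∑ i, X i) μ l := by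
        simpa only [Finset.sum_apply] using h_chernoff
    _ = exp (-l * t) * ∏ i, mgf (X i) μ l := by rw [h_indep.mgf_sum h_meas]
    _ ≤ exp (-l * t) * ∏ i, exp (σ i * l ^ 2) := by
        gcongr with i
        · exact fun i _ => mgf_nonneg
        · exact h_mgf i l hlb
    _ ≤ exp (-l * t) * exp (V * l ^ 2) := by
        rw [← exp_sum, ← Finset.sum_mul]
        gcongr
    _ = exp (-t ^ 2 / (4 * V)) := by
        rw [← exp_add]
        congr 1
        simp only [l]
        field_simp
        ring

lemma measureReal_abs_sum_ge_le_of_mgf_le (h_meas : ∀ i, Measurable (X i))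
    (h_indep : iIndepFun X μ) (h_int : ∀ i l, Integrable (fun ω => exp (l * X i ω)) μ)
    (h_mgf : ∀ i l, |l| ≤ b → mgf (X i) μ l ≤ exp (σ i * l ^ 2))
    (hσ : ∑ i, σ i ≤ V) (hV : 0 < V) (ht₀ : 0 ≤ t) (ht : t ≤ 2 * b * V) :
    μ.real {ω | t ≤ |∑ i, X i ω|} ≤ 2 * exp (-t ^ 2 / (4 * V)) := by
  have h_upper := measureReal_sum_ge_le_of_mgf_le h_meas h_indep h_int h_mgf hσ hV ht₀ ht
  have h_lower := measureReal_sum_ge_le_of_mgf_le (X := fun i ω => -X i ω)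
    (fun i => (h_meas i).neg) (h_indep.comp (fun _ x => -x) fun _ => measurable_neg)
    (fun i l => by simpa using h_int i (-l))
    (fun i l hl => by
      simpa [← Pi.neg_def, mgf_neg] using h_mgf i (-l) (by rwa [abs_neg]))
    hσ hV ht₀ ht
  calc μ.real {ω | t ≤ |∑ i, X i ω|}
      ≤ μ.real ({ω | t ≤ ∑ i, X i ω} ∪ {ω | t ≤ ∑ i, -X i ω}) := by
        refine measureReal_mono (fun ω hω => ?_)
        rcases le_abs'.mp (Set.mem_ofPred.mp hω) with h | h
        · right; simp only [Set.mem_ofPred_eq, Finset.sum_neg_distrib]; linarith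
        · left; exact h
    _ ≤ 2 * exp (-t ^ 2 / (4 * V)) := (measureReal_union_le _ _).trans (by linarith)

end Bernstein

lemma IsProbVec.le_one {m : Type*} [Fintype m] {v : m → ℝ} (hv : IsProbVec v) (i : m) :
    v i ≤ 1 :=
  hv.2 ▸ single_le_sum (fun j _ => hv.1 j) (mem_univ i)

lemma IsProbVec.abs_le_one {m : Type*} [Fintype m] {v : m → ℝ} (hv : IsProbVec v) (i : m) :
    |v i| ≤ 1 :=
  abs_le.mpr ⟨by linarith [hv.1 i], hv.le_one i⟩

section ColumnStochastic

variable {p K n : ℕ} {A : Matrix (Fin p) (Fin K) ℝ} {W : Matrix (Fin K) (Fin n) ℝ}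

lemma ColsProb.rowL1_eq_sum (hA : ColsProb A) (j : Fin p) : rowL1 A j = ∑ k, A j k :=
  sum_congr rfl fun k _ => abs_of_nonneg ((hA k).1 j)

lemma ColsProb.mul_apply_le_rowL1 (hW : ColsProb W) (j : Fin p) (i : Fin n) :
    (A * W) j i ≤ rowL1 A j := by
  rw [mul_apply]
  refine sum_le_sum fun k _ => ?_
  calc A j k * W k i ≤ |A j k| * W k i := by gcongr; exacts [(hW i).1 k, le_abs_self _]
    _ ≤ |A j k| := mul_le_of_le_one_right (abs_nonneg _) ((hW i).le_one k)

lemma lamMinGe.le_diag {S : Matrix (Fin K) (Fin K) ℝ} {c : ℝ} (hS : lamMinGe S c) (k : Fin K) :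
    c ≤ S k k := by
  simpa [dotProduct, mulVec, Pi.single_apply] using hS (Pi.single k 1)

lemma ColsProb.SigmaW_diag_le (hW : ColsProb W) (k : Fin K) :
    SigmaW W k k ≤ (n : ℝ)⁻¹ * ∑ i, W k i := by
  simp only [SigmaW, Matrix.smul_apply, mul_apply, transpose_apply, smul_eq_mul]
  gcongr with i
  exact mul_le_of_le_one_right ((hW i).1 k) ((hW i).le_one k)

lemma mul_rowL1_le_diagAvg (hA : ColsProb A) (hW : ColsProb W) {c : ℝ}
    (hc : lamMinGe (SigmaW W) c) (j : Fin p) :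
    c * rowL1 A j ≤ diagAvg (A * W) j := by
  have h_avg : diagAvg (A * W) j = ∑ k, A j k * ((n : ℝ)⁻¹ * ∑ i, W k i) := by
    simp only [diagAvg, mul_apply, mul_sum]
    rw [sum_comm]
    exact sum_congr rfl fun k _ => sum_congr rfl fun i _ => by ring
  rw [h_avg, hA.rowL1_eq_sum, mul_sum]
  refine sum_le_sum fun k _ => ?_
  rw [mul_comm]
  exact mul_le_mul_of_nonneg_left ((hc.le_diag k).trans (hW.SigmaW_diag_le k)) ((hA k).1 j)

end ColumnStochastic

/-- The cross term `Z_j' w` of the noise `Z = D - D₀` with a weight vector `w`. -/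
def crossTerm {p n N : ℕ} (X : Fin n → Fin N → Fin p) (D0 : Matrix (Fin p) (Fin n) ℝ)
    (w : Fin n → ℝ) (j : Fin p) : ℝ :=
  ∑ i, (empD X j i - D0 j i) * w i

lemma crossTerm_eq_sum_words {p n N : ℕ} (hN : N ≠ 0) (X : Fin n → Fin N → Fin p)
    (D0 : Matrix (Fin p) (Fin n) ℝ) (w : Fin n → ℝ) (j : Fin p) :
    crossTerm X D0 w j = ∑ im : Fin n × Fin N,
      w im.1 / N * ((if X im.1 im.2 = j then 1 else 0) - D0 j im.1) := by
  rw [crossTerm, Fintype.sum_prod_type]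
  refine sum_congr rfl fun i _ => ?_
  simp only [empD, of_apply, ← mul_sum, sum_sub_distrib, sum_const, card_univ,
    Fintype.card_fin, nsmul_eq_mul]
  field_simp

section Words

variable {Ω : Type*} [MeasurableSpace Ω] {μ : Measure Ω} {p n N : ℕ}
  {D0 : Matrix (Fin p) (Fin n) ℝ} {X : Ω → Fin n → Fin N → Fin p}

lemma IsPLSIWords.mgf_mul_indicator_sub_le (hX : IsPLSIWords μ D0 X) (i : Fin n) (m : Fin N)
    (j : Fin p) {c l : ℝ} (hlc : |l * c| ≤ 1) :
    mgf (fun ω => c * ((if X ω i m = j then 1 else 0) - D0 j i)) μ l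
      ≤ exp (D0 j i * c ^ 2 * l ^ 2) := by
  have := hX.1
  set s := {ω | X ω i m = j}
  have hs : MeasurableSet s := hX.2.1 i m (measurableSet_singleton j)
  have hs_law : μ.real s = D0 j i := hX.2.2.2 i m j
  have h_word : (fun ω => c * ((if X ω i m = j then 1 else 0) - D0 j i))
      = fun ω => c * (s.indicator 1 ω - μ.real s) := by
    funext ω
    simp [s, Set.indicator_apply, hs_law]
  rw [h_word]
  refine (mgf_const_mul_indicator_sub_le hs hlc).trans_eq ?_
  rw [hs_law]
  ring_nf

lemma IsPLSIWords.measureReal_abs_crossTerm_ge_le (hX : IsPLSIWords μ D0 X) (hN : 0 < N)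
    {w : Fin n → ℝ} (hw : ∀ i, |w i| ≤ 1) (j : Fin p) {V t : ℝ}
    (hσ : ∑ i, D0 j i * w i ^ 2 ≤ N * V) (hV : 0 < V) (ht₀ : 0 ≤ t) (ht : t ≤ 2 * N * V) :
    μ.real {ω | t ≤ |crossTerm (X ω) D0 w j|} ≤ 2 * exp (-t ^ 2 / (4 * V)) := by
  have ⟨_, h_meas, h_indep, _⟩ := hX
  have hN' : (0 : ℝ) < N := by exact_mod_cast hN
  let g : Fin n × Fin N → Fin p → ℝ := fun im x =>
    w im.1 / N * ((if x = j then 1 else 0) - D0 j im.1)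
  let Y : Fin n × Fin N → Ω → ℝ := fun im ω => g im (X ω im.1 im.2)
  have hY_meas : ∀ im, Measurable (Y im) := fun im =>
    (measurable_from_top (f := g im)).comp (h_meas im.1 im.2)
  have hY_indep : iIndepFun Y μ := h_indep.comp g fun _ => measurable_from_top
  have hY_int : ∀ im l, Integrable (fun ω => exp (l * Y im ω)) μ := fun im l =>
    Integrable.comp_measurable (g := fun x => exp (l * g im x)) .of_finite (h_meas im.1 im.2)
  have hlw : ∀ i (l : ℝ), |l| ≤ N → |l * (w i / N)| ≤ 1 := by
    intro i l hl
    rw [abs_mul, abs_div, Nat.abs_cast]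
    calc |l| * (|w i| / N) ≤ N * (1 / N) := by gcongr; exact hw i
      _ = 1 := by field_simp
  have hY_mgf : ∀ im (l : ℝ), |l| ≤ N →
      mgf (Y im) μ l ≤ exp (D0 j im.1 * (w im.1 / N) ^ 2 * l ^ 2) := fun im l hl =>
    hX.mgf_mul_indicator_sub_le im.1 im.2 j (hlw im.1 l hl)
  have hσY : ∑ im : Fin n × Fin N, D0 j im.1 * (w im.1 / N) ^ 2 ≤ V := by
    rw [Fintype.sum_prod_type]
    simp only [sum_const, card_univ, Fintype.card_fin, nsmul_eq_mul]
    calc ∑ i, (N : ℝ) * (D0 j i * (w i / N) ^ 2) = (∑ i, D0 j i * w i ^ 2) / N := by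
          rw [sum_div]
          exact sum_congr rfl fun i _ => by field_simp
      _ ≤ V := by rwa [div_le_iff₀ hN', mul_comm]
  have := measureReal_abs_sum_ge_le_of_mgf_le hY_meas hY_indep hY_int hY_mgf hσY hV ht₀ ht
  simpa only [crossTerm_eq_sum_words hN.ne'] using this

end Words

lemma mul_inv_sqrt_mul_sqrt {C x y : ℝ} (hC : 0 ≤ C) (hy : 0 ≤ y) :
    C * (√y)⁻¹ * √x = √(C ^ 2 * x / y) := by
  rw [sqrt_div' _ hy, sqrt_mul (sq_nonneg C), sqrt_sq hC]
  ring

lemma enorm_inv_sqrt_mul_le {ι : Type*} [Fintype ι] {x h M : ι → ℝ} {r c : ℝ} (hc : 0 < c)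
    (hh : ∀ j, 0 < h j) (hM : ∀ j, c * h j ≤ M j) (hx : ∀ j, x j ^ 2 ≤ r * h j) :
    enorm (fun j => (√(M j))⁻¹ * x j) ≤ √(Fintype.card ι * r / c) := by
  have h_term : ∀ j, ((√(M j))⁻¹ * x j) ^ 2 ≤ r / c := by
    intro j
    have hM₀ : 0 < M j := (mul_pos hc (hh j)).trans_le (hM j)
    have hr : 0 ≤ r := by nlinarith [sq_nonneg (x j), hx j, hh j]
    rw [mul_pow, inv_pow, sq_sqrt hM₀.le, inv_mul_eq_div, div_le_div_iff₀ hM₀ hc]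
    nlinarith [hx j, hM j]
  refine sqrt_le_sqrt ((sum_le_sum fun j _ => h_term j).trans_eq ?_)
  rw [sum_const, card_univ, nsmul_eq_mul, mul_div_assoc]

lemma one_sub_measureReal_le_of_compl_subset {Ω : Type*} [MeasurableSpace Ω] {μ : Measure Ω}
    [IsProbabilityMeasure μ] {G B : Set Ω} (h : Gᶜ ⊆ B) : 1 - μ.real G ≤ μ.real B := by
  have h_cover := measureReal_union_le (μ := μ) G Gᶜ
  rw [Set.union_compl_self, probReal_univ] at h_cover
  linarith [measureReal_mono (μ := μ) h]

section FixedSample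

variable {Ω : Type*} [MeasurableSpace Ω] {μ : Measure Ω} {K p n N : ℕ}
  {A : Matrix (Fin p) (Fin K) ℝ} {W : Matrix (Fin K) (Fin n) ℝ}
  {X : Ω → Fin n → Fin N → Fin p} {L : ℝ}

/-- The variance proxy is `V = n h_j / N`, and the threshold is chosen so that
`t² / (4V) = 16 L`. -/
lemma IsPLSIWords.measureReal_abs_crossTerm_ge_le_exp (hX : IsPLSIWords μ (A * W) X)
    (hW : ColsProb W) (hN : 0 < N) (hn : 0 < n) (hL : 0 ≤ L) (k : Fin K) {j : Fin p}
    (hj : 0 < rowL1 A j) (hNL : 16 * L ≤ N * n * rowL1 A j) :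
    μ.real {ω | √(64 * n * L / N * rowL1 A j) ≤ |crossTerm (X ω) (A * W) (W k) j|}
      ≤ 2 * exp (-(16 * L)) := by
  set h := rowL1 A j
  have hN' : (0 : ℝ) < N := by exact_mod_cast hN
  have hn' : (0 : ℝ) < n := by exact_mod_cast hn
  have hσ : ∑ i, (A * W) j i * W k i ^ 2 ≤ N * (n * h / N) := by
    calc ∑ i, (A * W) j i * W k i ^ 2 ≤ ∑ _i : Fin n, h * 1 := by
          gcongr with i
          · exact hW.mul_apply_le_rowL1 j i
          · exact (sq_le_one_iff_abs_le_one _).mpr ((hW i).abs_le_one k)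
      _ = N * (n * h / N) := by
          rw [sum_const, card_univ, Fintype.card_fin, nsmul_eq_mul]
          field_simp
  have ht : √(64 * n * L / N * h) ≤ 2 * N * (n * h / N) := by
    rw [sqrt_le_left (by positivity), div_mul_eq_mul_div, div_le_iff₀ hN']
    field_simp
    nlinarith
  convert hX.measureReal_abs_crossTerm_ge_le hN (fun i => (hW i).abs_le_one k) j hσ
    (by positivity) (sqrt_nonneg _) ht using 3
  rw [sq_sqrt (by positivity)]
  field_simp
  ring

lemma abs_le_and_enorm_le_of_abs_le_sqrt {h M S : Fin p → ℝ} {c : ℝ} (hc : 0 < c)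
    (hh : ∀ j, 0 < h j) (hM : ∀ j, c * h j ≤ M j) (hL : 0 ≤ L)
    (hS : ∀ j, |S j| ≤ √(64 * n * L / N * h j)) :
    (∀ j, |S j| ≤ 8 * √(1 + c⁻¹) * (√N)⁻¹ * √(n * h j * L)) ∧
      enorm (fun j => (√(M j))⁻¹ * S j) ≤ 8 * √(1 + c⁻¹) * (√N)⁻¹ * √(n * p * L) := by
  set r : ℝ := 64 * n * L / N
  have hr : 0 ≤ r := by positivity
  have hC : (8 * √(1 + c⁻¹)) ^ 2 = 64 * (1 + c⁻¹) := by
    rw [mul_pow, sq_sqrt (by positivity)]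
    norm_num
  simp only [mul_inv_sqrt_mul_sqrt (by positivity : (0 : ℝ) ≤ 8 * √(1 + c⁻¹))
    (Nat.cast_nonneg N), hC]
  refine ⟨fun j => (hS j).trans (sqrt_le_sqrt ?_), ?_⟩
  · calc r * h j = 64 * (n * h j * L) / N := by ring
      _ ≤ 64 * (1 + c⁻¹) * (n * h j * L) / N := by
        have := mul_nonneg (mul_nonneg n.cast_nonneg (hh j).le) hL
        gcongr
        linarith [inv_pos.mpr hc]
  · refine (enorm_inv_sqrt_mul_le hc hh hM
      (fun j => (Real.sq_le (mul_nonneg hr (hh j).le)).mpr (abs_le.mp (hS j)))).trans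
      (sqrt_le_sqrt ?_)
    calc Fintype.card (Fin p) * r / c = 64 * c⁻¹ * (n * p * L) / N := by
          rw [Fintype.card_fin]
          ring
      _ ≤ 64 * (1 + c⁻¹) * (n * p * L) / N := by
        gcongr
        linarith

lemma IsPLSIWords.one_sub_measureReal_crossTerm_le (hX : IsPLSIWords μ (A * W) X)
    (hA : ColsProb A) (hW : ColsProb W) (hh : ∀ j, 0 < rowL1 A j) {c : ℝ} (hc : 0 < c)
    (hlam : lamMinGe (SigmaW W) c) (hN : 0 < N) (hn : 0 < n) (hL : 0 ≤ L)
    (hNL : ∀ j, 16 * L ≤ N * n * rowL1 A j) :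
    1 - μ.real {ω | ∀ k,
      (∀ j, |crossTerm (X ω) (A * W) (W k) j| ≤
        8 * √(1 + c⁻¹) * (√N)⁻¹ * √(n * rowL1 A j * L)) ∧
      enorm (fun j => (√(diagAvg (A * W) j))⁻¹ * crossTerm (X ω) (A * W) (W k) j) ≤
        8 * √(1 + c⁻¹) * (√N)⁻¹ * √(n * p * L)}
      ≤ 2 * K * p * exp (-(16 * L)) := by
  have := hX.1
  let bad : Fin K → Fin p → Set Ω := fun k j =>
    {ω | √(64 * n * L / N * rowL1 A j) ≤ |crossTerm (X ω) (A * W) (W k) j|}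
  refine (one_sub_measureReal_le_of_compl_subset (B := ⋃ k, ⋃ j, bad k j) ?_).trans ?_
  · intro ω hω
    by_contra h_good
    simp only [bad, Set.mem_iUnion, Set.mem_ofPred_eq, not_exists, not_le] at h_good
    exact hω fun k => abs_le_and_enorm_le_of_abs_le_sqrt hc hh
      (mul_rowL1_le_diagAvg hA hW hlam) hL fun j => (h_good k j).le
  · calc μ.real (⋃ k, ⋃ j, bad k j) ≤ ∑ k, ∑ j, μ.real (bad k j) :=
        (measureReal_iUnion_fintype_le _).trans
          (sum_le_sum fun k _ => measureReal_iUnion_fintype_le _)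
      _ ≤ ∑ _k : Fin K, ∑ _j : Fin p, 2 * exp (-(16 * L)) := by
        gcongr with k _ j
        exact hX.measureReal_abs_crossTerm_ge_le_exp hW hN hn hL k (hh j) (hNL j)
      _ = 2 * K * p * exp (-(16 * L)) := by
        simp only [sum_const, card_univ, Fintype.card_fin, nsmul_eq_mul]
        ring

end FixedSample

theorem statement_17_general (K : ℕ) (c1 : ℝ) (hc1 : 0 < c1) :
    ∃ C : ℝ, 0 < C ∧
      ∀ (N p : ℕ → ℕ)
        (A : ∀ n : ℕ, Matrix (Fin (p n)) (Fin (K + 1)) ℝ)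
        (W : ∀ n : ℕ, Matrix (Fin (K + 1)) (Fin n) ℝ)
        (Ω : ℕ → Type) (mΩ : ∀ n, MeasurableSpace (Ω n)) (μ : ∀ n, Measure (Ω n))
        (X : ∀ n : ℕ, Ω n → Fin n → Fin (N n) → Fin (p n)),
        (∀ n, K + 1 ≤ p n) → (∀ n, 0 < N n) →
        (∀ n, N n ≤ n ∧ p n ≤ n) →
        (∀ n, ColsProb (A n)) → (∀ n, ColsProb (W n)) →
        (∀ n, ∀ j, 0 < rowL1 (A n) j) →
        (∀ n, lamMinGe (SigmaW (W n)) c1) →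
        (∀ n, IsPLSIWords (μ n) (A n * W n) (X n)) →
        Tendsto (fun n : ℕ =>
          (N n : ℝ) * n * (⨅ j, rowL1 (A n) j) / Real.log n) atTop atTop →
        Tendsto (fun n : ℕ => (n : ℝ) ^ 3 *
          (1 - (μ n {ω | ∀ k,
            (∀ j, |∑ i, (empD (X n ω) j i - (A n * W n) j i) * W n k i| ≤
                C * (Real.sqrt (N n : ℝ))⁻¹ *
                  Real.sqrt ((n : ℝ) * rowL1 (A n) j * Real.log n)) ∧
            enorm (fun j => (Real.sqrt (diagAvg (A n * W n) j))⁻¹ *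
                ∑ i, (empD (X n ω) j i - (A n * W n) j i) * W n k i) ≤
              C * (Real.sqrt (N n : ℝ))⁻¹ *
                Real.sqrt ((n : ℝ) * (p n : ℝ) * Real.log n)}).toReal))
          atTop (nhds 0) := by
  refine ⟨8 * √(1 + c1⁻¹), by positivity, ?_⟩
  intro N p A W Ω _ μ X _ hN hle hA hW hh hlam hX h_growth
  have h_level : ∀ᶠ n : ℕ in atTop, ∀ j, 16 * log n ≤ N n * n * rowL1 (A n) j := by
    filter_upwards [h_growth.eventually_ge_atTop 16, eventually_gt_atTop 1] with n h16 hn j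
    rw [le_div_iff₀ (log_pos (by exact_mod_cast hn))] at h16
    exact h16.trans (by gcongr; exact ciInf_le (Finite.bddBelow_range _) j)
  have h_rate : Tendsto (fun n : ℕ => 2 * (K + 1) / (n : ℝ) ^ 12) atTop (nhds 0) :=
    tendsto_const_nhds.div_atTop
      ((tendsto_pow_atTop (by norm_num : 12 ≠ 0)).comp tendsto_natCast_atTop_atTop)
  refine squeeze_zero' (Eventually.of_forall fun n => ?_) ?_ h_rate
  · have := (hX n).1
    exact mul_nonneg (by positivity) (sub_nonneg.mpr measureReal_le_one)
  filter_upwards [eventually_gt_atTop 1, h_level] with n hn h_lev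
  have hn' : (1 : ℝ) < n := by exact_mod_cast hn
  have h_exp : exp (-(16 * log n)) = ((n : ℝ) ^ 16)⁻¹ := by
    rw [exp_neg, ← exp_log (pow_pos (zero_lt_one.trans hn') 16), log_pow]
    norm_num
  refine (mul_le_mul_of_nonneg_left ((hX n).one_sub_measureReal_crossTerm_le (hA n) (hW n)
    (hh n) hc1 (hlam n) (hN n) (by omega) (log_nonneg hn'.le) h_lev) (by positivity)).trans ?_
  rw [h_exp]
  have hn₀ : (n : ℝ) ≠ 0 := by positivity
  calc (n : ℝ) ^ 3 * (2 * ↑(K + 1) * p n * ((n : ℝ) ^ 16)⁻¹)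
      = (2 * (K + 1) * p n / n ^ 13 : ℝ) := by
        push_cast
        field_simp
    _ ≤ 2 * (K + 1) * n / n ^ 13 := by gcongr; exact_mod_cast (hle n).2
    _ = 2 * (K + 1) / n ^ 12 := by field_simp

/-- Lemma: concentration of the cross terms `Z'W_k`. -/
theorem statement_17 (K : ℕ) (hK : 1 ≤ K) (c1 : ℝ) (hc1 : 0 < c1) :
    ∃ C : ℝ, 0 < C ∧
      ∀ (N p : ℕ → ℕ)
        (A : ∀ n : ℕ, Matrix (Fin (p n)) (Fin (K + 1)) ℝ)
        (W : ∀ n : ℕ, Matrix (Fin (K + 1)) (Fin n) ℝ)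
        (Ω : ℕ → Type) (mΩ : ∀ n, MeasurableSpace (Ω n)) (μ : ∀ n, Measure (Ω n))
        (X : ∀ n : ℕ, Ω n → Fin n → Fin (N n) → Fin (p n)),
        (∀ n, K + 1 ≤ p n) → (∀ n, 0 < N n) →
        (∀ n, N n ≤ n ∧ p n ≤ n) →
        (∀ n, ColsProb (A n)) → (∀ n, ColsProb (W n)) →
        (∀ n, ∀ j, 0 < rowL1 (A n) j) →
        (∀ n, lamMinGe (SigmaW (W n)) c1) →
        (∀ n, IsPLSIWords (μ n) (A n * W n) (X n)) →
        Tendsto (fun n : ℕ =>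
          (N n : ℝ) * n * (⨅ j, rowL1 (A n) j) / Real.log n) atTop atTop →
        Tendsto (fun n : ℕ => (n : ℝ) ^ 3 *
          (1 - (μ n {ω | ∀ k,
            (∀ j, |∑ i, (empD (X n ω) j i - (A n * W n) j i) * W n k i| ≤
                C * (Real.sqrt (N n : ℝ))⁻¹ *
                  Real.sqrt ((n : ℝ) * rowL1 (A n) j * Real.log n)) ∧
            enorm (fun j => (Real.sqrt (diagAvg (A n * W n) j))⁻¹ *
                ∑ i, (empD (X n ω) j i - (A n * W n) j i) * W n k i) ≤
              C * (Real.sqrt (N n : ℝ))⁻¹ *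
                Real.sqrt ((n : ℝ) * (p n : ℝ) * Real.log n)}).toReal))
          atTop (nhds 0) :=
  statement_17_general K c1 hc1

end TopicModel
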